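/- arXiv:2209.01907 — 4 statements merged into one kernel-verified Lean document; each statement's English description precedes it below -/
import Mathlib

section
/- Let q ∈ ℂ and let f, g, p ∈ ℂ[[X]] be formal power series with constantCoeff f = 0, constantCoeff g = 0, constantCoeff p = 0, such that g is the compositional inverse of f (i.e. f ∘ g = X and g ∘ f = X), and suppose f satisfies the Poincaré functional equation rescale q f = p ∘ f. Then g satisfies Schröder's equation: (C q) · g = g ∘ p, where C q denotes the constant power series q. -/
open PowerSeries

/-- Composition of formal power series: `psComp g h = g ∘ h`, with
`coeff j (g ∘ h) = ∑_{l=0}^{j} (coeff l g) * (coeff j (h^l))`. -/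
noncomputable def psComp (g h : PowerSeries ℂ) : PowerSeries ℂ :=
  PowerSeries.mk fun j =>
    ∑ l ∈ Finset.range (j + 1), (coeff l g) * (coeff j (h ^ l))

lemma coeff_psComp (g h : PowerSeries ℂ) (j : ℕ) :
    coeff j (psComp g h) =
      ∑ l ∈ Finset.range (j + 1), (coeff l g) * (coeff j (h ^ l)) := by
  simp [psComp]

lemma coeff_pow_eq_zero' {h : PowerSeries ℂ} (hh : constantCoeff h = 0)
    {j l : ℕ} (hjl : j < l) : coeff j (h ^ l) = 0 := by
  have hd : (X : PowerSeries ℂ) ^ l ∣ h ^ l :=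
    pow_dvd_pow_of_dvd (PowerSeries.X_dvd_iff.mpr hh) l
  exact PowerSeries.X_pow_dvd_iff.mp hd j hjl

lemma coeff_eval₂' {h : PowerSeries ℂ} (hh : constantCoeff h = 0)
    (P : Polynomial ℂ) (j : ℕ) :
    coeff j (P.eval₂ (C) h) =
      ∑ i ∈ Finset.range (j + 1), P.coeff i * coeff j (h ^ i) := by
  set n := max (P.natDegree + 1) (j + 1) with hn
  have hdeg : P.natDegree < n := lt_of_lt_of_le (Nat.lt_succ_self _) (le_max_left _ _)
  rw [Polynomial.eval₂_eq_sum_range' (C) hdeg h, map_sum]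
  simp only [coeff_C_mul]
  refine (Finset.sum_subset (Finset.range_subset_range.mpr (le_max_right _ _)) ?_).symm
  intro i _ hi
  rw [Finset.mem_range, not_lt] at hi
  rw [coeff_pow_eq_zero' hh (by omega), mul_zero]

lemma coeff_psComp_eq_eval₂ {h : PowerSeries ℂ} (hh : constantCoeff h = 0)
    (g : PowerSeries ℂ) {j n : ℕ} (hjn : j < n) :
    coeff j (psComp g h) = coeff j ((PowerSeries.trunc n g).eval₂ (C) h) := by
  rw [coeff_eval₂' hh, coeff_psComp]
  refine Finset.sum_congr rfl fun i hi => ?_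
  rw [Finset.mem_range] at hi
  rw [PowerSeries.coeff_trunc, if_pos (by omega)]

lemma coeff_psComp_congr {x y : PowerSeries ℂ} {j : ℕ}
    (hxy : ∀ i ≤ j, coeff i x = coeff i y) (h : PowerSeries ℂ) :
    coeff j (psComp x h) = coeff j (psComp y h) := by
  rw [coeff_psComp, coeff_psComp]
  refine Finset.sum_congr rfl fun i hi => ?_
  rw [Finset.mem_range] at hi
  rw [hxy i (by omega)]

lemma psComp_add (a b h : PowerSeries ℂ) :
    psComp (a + b) h = psComp a h + psComp b h := by
  ext j
  simp [coeff_psComp, add_mul, Finset.sum_add_distrib]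

lemma psComp_C (a : ℂ) (h : PowerSeries ℂ) : psComp (C a) h = C a := by
  ext j
  rw [coeff_psComp, Finset.sum_eq_single 0]
  · simp [coeff_C]
  · intro l _ hl
    simp [coeff_C, hl]
  · intro h0
    exact absurd (Finset.mem_range.mpr (Nat.succ_pos j)) h0

lemma psComp_X {h : PowerSeries ℂ} (hh : constantCoeff h = 0) :
    psComp X h = h := by
  ext j
  rw [coeff_psComp, Finset.sum_eq_single 1]
  · simp
  · intro l _ hl
    simp [coeff_X, hl]
  · intro h1
    have hj : j = 0 := by
      rw [Finset.mem_range] at h1; omega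
    subst hj
    simp [coeff_X, hh]

lemma psComp_X_right (a : PowerSeries ℂ) : psComp a X = a := by
  ext j
  rw [coeff_psComp, Finset.sum_eq_single j]
  · simp
  · intro l _ hl
    simp [coeff_X_pow, Ne.symm hl]
  · intro hj
    exact absurd (Finset.self_mem_range_succ j) hj

lemma psComp_mul {h : PowerSeries ℂ} (hh : constantCoeff h = 0)
    (a b : PowerSeries ℂ) : psComp (a * b) h = psComp a h * psComp b h := by
  ext j
  set n := j + 1 with hn
  rw [coeff_psComp_eq_eval₂ hh (a * b) (Nat.lt_succ_self j)]
  have hcoeff : ∀ i ≤ j,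
      (PowerSeries.trunc n (a * b)).coeff i =
        (PowerSeries.trunc n a * PowerSeries.trunc n b).coeff i := by
    intro i hi
    rw [PowerSeries.coeff_trunc, if_pos (by omega), ← Polynomial.coeff_coe,
      Polynomial.coe_mul,
      ← PowerSeries.coeff_mul_eq_coeff_trunc_mul_trunc a b (by omega : i < n)]
  have heq : coeff j ((PowerSeries.trunc n (a * b)).eval₂ (C) h) =
      coeff j ((PowerSeries.trunc n a * PowerSeries.trunc n b).eval₂ (C) h) := by
    rw [coeff_eval₂' hh, coeff_eval₂' hh]
    refine Finset.sum_congr rfl fun i hi => ?_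
    rw [Finset.mem_range] at hi
    rw [hcoeff i (by omega)]
  rw [heq, Polynomial.eval₂_mul, PowerSeries.coeff_mul, PowerSeries.coeff_mul]
  refine Finset.sum_congr rfl fun uv huv => ?_
  rw [Finset.HasAntidiagonal.mem_antidiagonal] at huv
  rw [← coeff_psComp_eq_eval₂ hh a (show uv.1 < n by omega),
    ← coeff_psComp_eq_eval₂ hh b (show uv.2 < n by omega)]

noncomputable def psCompHom (c : PowerSeries ℂ) (hc : constantCoeff c = 0) :
    PowerSeries ℂ →+* PowerSeries ℂ where
  toFun x := psComp x c
  map_one' := by simpa using psComp_C 1 c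
  map_mul' a b := psComp_mul hc a b
  map_zero' := by simpa using psComp_C 0 c
  map_add' a b := psComp_add a b c

lemma constantCoeff_psComp (a b : PowerSeries ℂ) :
    constantCoeff (psComp a b) = constantCoeff a := by
  have h := coeff_psComp a b 0
  simpa using h

lemma psComp_assoc {b c : PowerSeries ℂ} (hb : constantCoeff b = 0)
    (hc : constantCoeff c = 0) (a : PowerSeries ℂ) :
    psComp (psComp a b) c = psComp a (psComp b c) := by
  have hbc : constantCoeff (psComp b c) = 0 := by
    rw [constantCoeff_psComp, hb]
  ext j
  set n := j + 1 with hn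
  have step1 : coeff j (psComp (psComp a b) c) =
      coeff j (psComp ((PowerSeries.trunc n a).eval₂ (C) b) c) := by
    refine coeff_psComp_congr (fun i hi => ?_) c
    exact coeff_psComp_eq_eval₂ hb a (by omega)
  have step2 : psComp ((PowerSeries.trunc n a).eval₂ (C) b) c =
      (PowerSeries.trunc n a).eval₂ (C) (psComp b c) := by
    have h1 : psComp ((PowerSeries.trunc n a).eval₂ (C) b) c =
        (psCompHom c hc) ((PowerSeries.trunc n a).eval₂ (C) b) := rfl
    rw [h1, Polynomial.hom_eval₂]
    have h2 : (psCompHom c hc).comp (C) = C :=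
      RingHom.ext fun a' => psComp_C a' c
    have h3 : (psCompHom c hc) b = psComp b c := rfl
    rw [h2, h3]
  rw [step1, step2, ← coeff_psComp_eq_eval₂ hbc a (Nat.lt_succ_self j)]

lemma psComp_CqX (q : ℂ) (f : PowerSeries ℂ) :
    psComp f (C q * X) = rescale q f := by
  ext j
  rw [coeff_psComp, PowerSeries.coeff_rescale]
  have hpow : ∀ l : ℕ, (C q * X) ^ l = C (q ^ l) * X ^ l := by
    intro l; rw [mul_pow, ← map_pow]
  rw [Finset.sum_eq_single j]
  · rw [hpow, coeff_C_mul, coeff_X_pow_self, mul_one, mul_comm]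
  · intro l _ hl
    rw [hpow, coeff_C_mul, coeff_X_pow, if_neg (Ne.symm hl), mul_zero, mul_zero]
  · intro hj
    exact absurd (Finset.self_mem_range_succ j) hj

theorem stmt_1 (q : ℂ) (f g p : PowerSeries ℂ)
    (hf0 : constantCoeff f = 0) (hg0 : constantCoeff g = 0)
    (hp0 : constantCoeff p = 0)
    (hfg : psComp f g = PowerSeries.X) (hgf : psComp g f = PowerSeries.X)
    (hpoincare : rescale q f = psComp p f) :
    (PowerSeries.C q) * g = psComp g p := by
  have hCqX : constantCoeff (C q * X) = 0 := by
    simp [PowerSeries.constantCoeff_X]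
  have hrq0 : constantCoeff (rescale q f) = 0 := by
    rw [← coeff_zero_eq_constantCoeff_apply, PowerSeries.coeff_rescale, pow_zero, one_mul,
      coeff_zero_eq_constantCoeff_apply, hf0]
  have hkey : psComp g (rescale q f) = C q * X := by
    rw [← psComp_CqX, ← psComp_assoc hf0 hCqX, hgf, psComp_X hCqX]
  have hp_eq : psComp (rescale q f) g = p := by
    rw [hpoincare, psComp_assoc hf0 hg0, hfg, psComp_X_right]
  calc (PowerSeries.C q) * g
      = psComp (C q) g * psComp X g := by rw [psComp_C, psComp_X hg0]
    _ = psComp (C q * X) g := (psComp_mul hg0 _ _).symm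
    _ = psComp (psComp g (rescale q f)) g := by rw [hkey]
    _ = psComp g (psComp (rescale q f) g) := psComp_assoc hrq0 hg0 g
    _ = psComp g p := by rw [hp_eq]
end

section
/- Let q ∈ ℂ be nonzero and not a root of unity (q^k ≠ 1 for every positive integer k), and let p ∈ ℂ[[X]] satisfy constantCoeff p = 0 and coeff 1 p = q. Then there exists a unique formal power series f ∈ ℂ[[X]] with constantCoeff f = 0 and coeff 1 f = 1 satisfying the Poincaré functional equation rescale q f = p ∘ f. -/
open PowerSeries

lemma lemA (f g : PowerSeries ℂ) (hf : constantCoeff f = 0) (hg : constantCoeff g = 0)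
    (n l : ℕ) (hl : 2 ≤ l) (h : (X : PowerSeries ℂ) ^ n ∣ f - g) :
    (X : PowerSeries ℂ) ^ (n + 1) ∣ f ^ l - g ^ l := by
  rw [← geom_sum₂_mul f g l, pow_succ']
  apply mul_dvd_mul _ h
  apply Finset.dvd_sum
  intro i hi
  rcases Nat.eq_zero_or_pos i with h0 | h0
  · subst h0
    simp only [pow_zero, one_mul]
    exact dvd_pow (PowerSeries.X_dvd_iff.mpr hg) (by omega)
  · exact Dvd.dvd.mul_right (dvd_pow (PowerSeries.X_dvd_iff.mpr hf) (by omega)) _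

lemma coeff_eq_of_agree (f g : PowerSeries ℂ) (hf : constantCoeff f = 0)
    (hg : constantCoeff g = 0) (n l : ℕ) (hl : 2 ≤ l)
    (h : ∀ m < n, coeff m f = coeff m g) :
    coeff n (f ^ l) = coeff n (g ^ l) := by
  have hdvd : (X : PowerSeries ℂ) ^ n ∣ f - g := by
    rw [PowerSeries.X_pow_dvd_iff]
    intro m hm
    rw [map_sub, h m hm, sub_self]
  have := lemA f g hf hg n l hl hdvd
  rw [PowerSeries.X_pow_dvd_iff] at this
  have := this n (by omega)
  rw [map_sub, sub_eq_zero] at this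
  exact this

noncomputable def coefA (q : ℂ) (p : PowerSeries ℂ) : ℕ → ℂ
  | 0 => 0
  | 1 => 1
  | n + 2 => (q ^ (n + 2) - q)⁻¹ *
      ∑ l ∈ Finset.Icc 2 (n + 2), (coeff l p) *
        coeff (n + 2) ((PowerSeries.mk fun m => if _ : m < n + 2 then coefA q p m else 0) ^ l)

theorem stmt_2 (q : ℂ) (hq0 : q ≠ 0) (hq1 : ∀ k : ℕ, 0 < k → q ^ k ≠ 1)
    (p : PowerSeries ℂ) (hp0 : constantCoeff p = 0) (hp1 : coeff 1 p = q) :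
    ∃! f : PowerSeries ℂ,
      constantCoeff f = 0 ∧ coeff 1 f = 1 ∧ rescale q f = psComp p f := by
  set G : ℕ → PowerSeries ℂ :=
    fun n => PowerSeries.mk fun m => if _ : m < n + 2 then coefA q p m else 0 with hG
  have hG0 : ∀ n, constantCoeff (G n) = 0 := by
    intro n
    rw [hG]
    rw [PowerSeries.constantCoeff_mk, dif_pos (by omega)]
    simp [coefA]
  have hGcoeff : ∀ n m, m < n + 2 → coeff m (G n) = coefA q p m := by
    intro n m hm
    rw [hG, coeff_mk, dif_pos hm]
  set f : PowerSeries ℂ := PowerSeries.mk (coefA q p) with hfdef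
  have hf0 : constantCoeff f = 0 := by
    rw [hfdef, PowerSeries.constantCoeff_mk]; simp [coefA]
  have hf1 : coeff 1 f = 1 := by rw [hfdef, coeff_mk]; simp [coefA]
  have hd : ∀ n : ℕ, q ^ (n + 2) - q ≠ 0 := by
    intro n h
    apply hq1 (n + 1) (by omega)
    apply mul_left_cancel₀ hq0
    rw [sub_eq_zero] at h
    rw [mul_one, show q * q ^ (n + 1) = q ^ (n + 2) by ring]; exact h
  have hsplit : ∀ n : ℕ, Finset.range (n + 3) = insert 0 (insert 1 (Finset.Icc 2 (n + 2))) := by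
    intro n; ext x; simp; omega
  have hmem0 : ∀ n : ℕ, (0 : ℕ) ∉ insert 1 (Finset.Icc 2 (n + 2)) := by
    intro n; simp
  have hmem1 : ∀ n : ℕ, (1 : ℕ) ∉ Finset.Icc 2 (n + 2) := by intro n; simp
  -- coefficients of f agree with G n below n+2
  have hagree : ∀ (n : ℕ) (h : PowerSeries ℂ), constantCoeff h = 0 →
      (∀ m < n + 2, coeff m h = coefA q p m) →
      ∀ l, 2 ≤ l → coeff (n + 2) (h ^ l) = coeff (n + 2) ((G n) ^ l) := by
    intro n h hh0 hh l hl
    apply coeff_eq_of_agree h (G n) hh0 (hG0 n) (n + 2) l hl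
    intro m hm
    rw [hh m hm, hGcoeff n m hm]
  have hfagree : ∀ m, coeff m f = coefA q p m := fun m => coeff_mk m _
  -- the defining equation for coefA at n+2
  have hdef : ∀ n : ℕ, coefA q p (n + 2) = (q ^ (n + 2) - q)⁻¹ *
      ∑ l ∈ Finset.Icc 2 (n + 2), (coeff l p) * coeff (n + 2) ((G n) ^ l) := by
    intro n; rw [coefA]
  -- main computation, shared by existence and uniqueness:
  have main : ∀ (n : ℕ) (h : PowerSeries ℂ), constantCoeff h = 0 →
      (∀ m < n + 2, coeff m h = coefA q p m) →
      ∑ l ∈ Finset.range (n + 2 + 1), coeff l p * coeff (n + 2) (h ^ l)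
        = q * coeff (n + 2) h
          + ∑ l ∈ Finset.Icc 2 (n + 2), (coeff l p) * coeff (n + 2) ((G n) ^ l) := by
    intro n h hh0 hh
    rw [show n + 2 + 1 = n + 3 from rfl, hsplit n, Finset.sum_insert (hmem0 n),
      Finset.sum_insert (hmem1 n)]
    have t0 : coeff 0 p * coeff (n + 2) (h ^ 0) = 0 := by
      rw [pow_zero, PowerSeries.coeff_one, if_neg (by omega : ¬(n + 2 = 0)), mul_zero]
    rw [t0, zero_add, pow_one, hp1]
    congr 1
    apply Finset.sum_congr rfl
    intro l hl
    rw [hagree n h hh0 hh l (by simp at hl; omega)]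
  refine ⟨f, ⟨hf0, hf1, ?_⟩, ?_⟩
  · ext j
    rw [coeff_rescale]
    show q ^ j * coeff j f = coeff j (psComp p f)
    simp only [psComp, coeff_mk]
    match j with
    | 0 => simp [hfagree, coefA, hp0, PowerSeries.coeff_zero_eq_constantCoeff]
    | 1 =>
      rw [Finset.sum_range_succ, Finset.sum_range_one]
      simp [hfagree 1, coefA, hp1, hp0, PowerSeries.coeff_one, hf1]
    | (n + 2) =>
      rw [main n f hf0 (fun m _ => hfagree m), hfagree (n + 2), hdef n]
      set S := ∑ l ∈ Finset.Icc 2 (n + 2), (coeff l p) * coeff (n + 2) ((G n) ^ l)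
      have := hd n
      field_simp
      ring
  · rintro f' ⟨h0', h1', heq'⟩
    have key : ∀ j, coeff j f' = coefA q p j := by
      intro j
      induction j using Nat.strong_induction_on with
      | _ j ih =>
        match j with
        | 0 =>
          rw [PowerSeries.coeff_zero_eq_constantCoeff, h0']
          simp [coefA]
        | 1 => rw [h1']; simp [coefA]
        | (n + 2) =>
          have hc := congrArg (coeff (n + 2)) heq'
          rw [coeff_rescale] at hc
          rw [show (coeff (n+2)) (psComp p f') =
            ∑ l ∈ Finset.range (n + 2 + 1), coeff l p * coeff (n + 2) (f' ^ l)
            from coeff_mk _ _] at hc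
          rw [main n f' h0' (fun m hm => ih m hm)] at hc
          set S := ∑ l ∈ Finset.Icc 2 (n + 2), (coeff l p) * coeff (n + 2) ((G n) ^ l)
          rw [hdef n]
          have := hd n
          have h2 : (q ^ (n + 2) - q) * coeff (n + 2) f' = S := by linear_combination hc
          field_simp
          linear_combination h2
    ext j
    rw [key j, hfagree j]
end

section
/- Let q ∈ ℂ be nonzero and not a root of unity, let p ∈ ℂ[[X]] satisfy constantCoeff p = 0 and coeff 1 p = q, and let f ∈ ℂ[[X]] with constantCoeff f = 0 and coeff 1 f = 1 satisfy the Poincaré functional equation rescale q f = p ∘ f. Then for every j ≥ 2 the coefficients of f satisfy the recursion (q^j − q) · coeff j f = Σ_{l=2}^{j} (coeff l p) · (coeff j (f^l)), where f^l denotes the l-th multiplicative power of f. (In particular, since q^j ≠ q for j ≥ 2, this determines coeff j f recursively from the lower-order coefficients.) -/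
open PowerSeries

theorem stmt_3 (q : ℂ) (hq0 : q ≠ 0) (hq1 : ∀ k : ℕ, 0 < k → q ^ k ≠ 1)
    (p : PowerSeries ℂ) (hp0 : constantCoeff p = 0) (hp1 : coeff 1 p = q)
    (f : PowerSeries ℂ) (hf0 : constantCoeff f = 0) (hf1 : coeff 1 f = 1)
    (hpoincare : rescale q f = psComp p f) :
    ∀ j : ℕ, 2 ≤ j →
      (q ^ j - q) * coeff j f = ∑ l ∈ Finset.Icc 2 j, (coeff l p) * (coeff j (f ^ l)) := by
  intro j hj
  have h := congrArg (coeff j) hpoincare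
  rw [coeff_rescale] at h
  simp only [psComp, coeff_mk] at h
  have hsplit : Finset.range (j + 1) = insert 0 (insert 1 (Finset.Icc 2 j)) := by
    ext x
    simp [Finset.mem_range, Finset.mem_Icc]
    omega
  rw [hsplit, Finset.sum_insert (by simp), Finset.sum_insert (by simp)] at h
  have h0 : coeff 0 p = 0 := by simpa [PowerSeries.coeff_zero_eq_constantCoeff] using hp0
  rw [h0, hp1] at h
  simp only [zero_mul, zero_add, pow_one] at h
  linear_combination h
end

section
/- Let q ∈ ℂ, let j be a natural number, and let g ∈ ℂ[x] be a polynomial such that g(q^m) = 0 for every natural number m with 0 ≤ m < j. Then for every formal power series f ∈ ℂ[[X]], the power series Σ_{i=0}^{natDegree g} (g.coeff i) • rescale (q^i) f is divisible by X^j, and its j-th coefficient equals g(q^j) · coeff j f; that is, coeff m (Σ_i (g.coeff i) • rescale (q^i) f) = 0 for all m < j and coeff j (Σ_i (g.coeff i) • rescale (q^i) f) = g(q^j) · coeff j f. -/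
open PowerSeries

theorem stmt_4 (q : ℂ) (j : ℕ) (g : Polynomial ℂ)
    (hg : ∀ m : ℕ, m < j → g.eval (q ^ m) = 0) (f : PowerSeries ℂ) :
    (∀ m : ℕ, m < j →
        coeff m (∑ i ∈ Finset.range (g.natDegree + 1),
          g.coeff i • rescale (q ^ i) f) = 0) ∧
      coeff j (∑ i ∈ Finset.range (g.natDegree + 1),
          g.coeff i • rescale (q ^ i) f) = g.eval (q ^ j) * coeff j f := by
  have key : ∀ n : ℕ, coeff n (∑ i ∈ Finset.range (g.natDegree + 1),
      g.coeff i • rescale (q ^ i) f) = g.eval (q ^ n) * coeff n f := by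
    intro n
    rw [map_sum, Polynomial.eval_eq_sum_range, Finset.sum_mul]
    refine Finset.sum_congr rfl fun i _ => ?_
    rw [map_smul, coeff_rescale, ← pow_mul, ← pow_mul']
    rw [smul_eq_mul]; ring
  exact ⟨fun m hm => by rw [key m, hg m hm, zero_mul], key j⟩
end
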